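/- Let γ : S^n → ℝ₊ be a C^∞ strictly convex integrand with dual δ. For every θ ∈ S^n the inequality γ(θ)·δ(−θ) ≥ 1 holds, with equality if and only if θ is a critical point of γ. -/

import Mathlib

open scoped RealInnerProductSpace

noncomputable def sphereInv {n : ℕ} (x : EuclideanSpace ℝ (Fin (n+1))) :
    EuclideanSpace ℝ (Fin (n+1)) := -((‖x‖^2)⁻¹ • x)

noncomputable def graphSet {n : ℕ} (γ : EuclideanSpace ℝ (Fin (n+1)) → ℝ) :
    Set (EuclideanSpace ℝ (Fin (n+1))) :=
  (fun θ => γ θ • θ) '' Metric.sphere 0 1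

def ConvexIntegrand {n : ℕ} (γ : EuclideanSpace ℝ (Fin (n+1)) → ℝ) : Prop :=
  ContinuousOn γ (Metric.sphere 0 1) ∧
  (∀ θ ∈ Metric.sphere (0 : EuclideanSpace ℝ (Fin (n+1))) 1, 0 < γ θ) ∧
  sphereInv '' graphSet γ = frontier (convexHull ℝ (sphereInv '' graphSet γ))

/-- A strictly convex integrand: the convex hull of `inv(graph γ)` is strictly convex. -/
def StrictConvexIntegrand {n : ℕ} (γ : EuclideanSpace ℝ (Fin (n+1)) → ℝ) : Prop :=
  ConvexIntegrand γ ∧ StrictConvex ℝ (convexHull ℝ (sphereInv '' graphSet γ))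

noncomputable def Wulff {n : ℕ} (γ : EuclideanSpace ℝ (Fin (n+1)) → ℝ) :
    Set (EuclideanSpace ℝ (Fin (n+1))) :=
  ⋂ θ ∈ Metric.sphere (0 : EuclideanSpace ℝ (Fin (n+1))) 1,
    {x | ⟪x, θ⟫ ≤ γ θ}

def IsDualIntegrand {n : ℕ} (γ δ : EuclideanSpace ℝ (Fin (n+1)) → ℝ) : Prop :=
  ConvexIntegrand δ ∧ sphereInv '' graphSet δ = frontier (Wulff γ)

/-- A point `θ₀ ∈ S^n` is a critical point of `γ` on the sphere, i.e. the
(spherical) gradient of `γ` at `θ₀` vanishes. -/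
def SphereCritical {n : ℕ} (γ : EuclideanSpace ℝ (Fin (n+1)) → ℝ)
    (θ₀ : EuclideanSpace ℝ (Fin (n+1))) : Prop :=
  ∀ v : EuclideanSpace ℝ (Fin (n+1)), ⟪v, θ₀⟫ = 0 → fderiv ℝ γ θ₀ v = 0

section Auxiliary

variable {n : ℕ}
local notation "E" => EuclideanSpace ℝ (Fin (n+1))

lemma sphereInv_smul {u : E} (hu : ‖u‖ = 1) {a : ℝ} (ha : 0 < a) :
    sphereInv (a • u) = -(a⁻¹ • u) := by
  have : ‖a • u‖ = a := by rw [norm_smul, hu, mul_one, Real.norm_eq_abs, abs_of_pos ha]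
  rw [sphereInv, this, smul_smul]
  congr 2
  field_simp

lemma mem_inv_graph (γ : E → ℝ) {η : E} (hη : ‖η‖ = 1) (hpos : 0 < γ η) :
    -((γ η)⁻¹ • η) ∈ sphereInv '' graphSet γ := by
  refine ⟨γ η • η, ⟨η, by simpa using hη, rfl⟩, ?_⟩
  rw [sphereInv_smul hη hpos]

lemma curve_hasDerivAt (θ w : E) :
    HasDerivAt (fun t : ℝ => Real.cos t • θ + Real.sin t • w) w 0 := by
  have h1 := (Real.hasDerivAt_cos 0).smul_const θ
  have h2 := (Real.hasDerivAt_sin 0).smul_const w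
  have := h1.add h2
  rw [Real.sin_zero, Real.cos_zero, neg_zero, zero_smul, one_smul, zero_add] at this
  exact this

lemma curve_norm {θ w : E} (hθ : ‖θ‖ = 1) (hw : ‖w‖ = 1) (ho : ⟪w, θ⟫ = 0) (t : ℝ) :
    ‖Real.cos t • θ + Real.sin t • w‖ = 1 := by
  have h2 : ‖Real.cos t • θ + Real.sin t • w‖^2 = 1 := by
    rw [norm_add_sq_real]
    have : ⟪Real.cos t • θ, Real.sin t • w⟫ = 0 := by
      rw [real_inner_smul_left, real_inner_smul_right, real_inner_comm, ho]; ring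
    rw [this, norm_smul, norm_smul, hθ, hw, mul_one, mul_one, Real.norm_eq_abs,
      Real.norm_eq_abs, sq_abs, sq_abs, ← Real.cos_sq_add_sin_sq t]
    ring
  rw [← Real.sqrt_one, ← h2, Real.sqrt_sq (norm_nonneg _)]

lemma mem_wulff_iff (γ : E → ℝ) (x : E) :
    x ∈ Wulff γ ↔ ∀ η : E, ‖η‖ = 1 → ⟪x, η⟫ ≤ γ η := by
  simp [Wulff, Set.mem_iInter, mem_sphere_zero_iff_norm]

lemma isClosed_wulff (γ : E → ℝ) : IsClosed (Wulff γ) :=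
  isClosed_biInter fun η _ => isClosed_le (continuous_id.inner continuous_const)
    continuous_const

lemma convex_wulff (γ : E → ℝ) : Convex ℝ (Wulff γ) :=
  convex_iInter fun η => convex_iInter fun _ =>
    convex_halfSpace_le ⟨fun x y => inner_add_left x y η,
      fun c x => real_inner_smul_left x η c⟩ (γ η)

lemma zero_mem_interior_wulff (γ : E → ℝ) (hc : Continuous γ)
    (hpos : ∀ η : E, ‖η‖ = 1 → 0 < γ η) {θ : E} (hθ : ‖θ‖ = 1) :
    (0 : E) ∈ interior (Wulff γ) := by
  obtain ⟨η₀, hη₀, hmin⟩ := (isCompact_sphere (0:E) 1).exists_isMinOn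
    ⟨θ, by simpa using hθ⟩ hc.continuousOn
  have hη₀n : ‖η₀‖ = 1 := by simpa using hη₀
  have hr : 0 < γ η₀ := hpos η₀ hη₀n
  rw [mem_interior]
  refine ⟨Metric.ball 0 (γ η₀), ?_, Metric.isOpen_ball, by simpa using hr⟩
  intro x hx
  rw [mem_wulff_iff]
  intro η hη
  have h1 : ⟪x, η⟫ ≤ ‖x‖ * ‖η‖ := real_inner_le_norm x η
  have h2 : ‖x‖ < γ η₀ := by simpa using hx
  have h3 : γ η₀ ≤ γ η := hmin (by simpa using hη)
  rw [hη, mul_one] at h1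
  linarith

lemma crit_of_support (γ : E → ℝ) (hsm : ContDiff ℝ (⊤ : ℕ∞) γ) {θ : E} (hθ : ‖θ‖ = 1)
    (h : ∀ η : E, ‖η‖ = 1 → γ θ * ⟪θ, η⟫ ≤ γ η) : SphereCritical γ θ := by
  have key : ∀ w : E, ‖w‖ = 1 → ⟪w, θ⟫ = 0 → fderiv ℝ γ θ w = 0 := by
    intro w hw ho
    set c : ℝ → E := fun t => Real.cos t • θ + Real.sin t • w with hc
    have hc0 : c 0 = θ := by simp [hc]
    have hcu : ∀ t, ‖c t‖ = 1 := fun t => curve_norm hθ hw ho t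
    have hγd : HasFDerivAt γ (fderiv ℝ γ θ) (c 0) := by
      rw [hc0]
      exact ((hsm.differentiable (by simp)) θ).hasFDerivAt
    have hcomp : HasDerivAt (fun t => γ (c t)) (fderiv ℝ γ θ w) 0 :=
      hγd.comp_hasDerivAt 0 (curve_hasDerivAt θ w)
    set g : ℝ → ℝ := fun t => γ (c t) - γ θ * Real.cos t with hg
    have hgd : HasDerivAt g (fderiv ℝ γ θ w - γ θ * (-Real.sin 0)) 0 :=
      hcomp.sub ((Real.hasDerivAt_cos 0).const_mul (γ θ))
    have hmin : ∀ t, g 0 ≤ g t := by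
      intro t
      have h0 : g 0 = 0 := by simp [hg, hc0]
      have hip : ⟪θ, c t⟫ = Real.cos t := by
        rw [hc]
        simp only
        rw [inner_add_right, real_inner_smul_right, real_inner_smul_right,
          real_inner_self_eq_norm_sq, hθ, real_inner_comm, ho]
        ring
      have := h (c t) (hcu t)
      rw [hip] at this
      rw [h0, hg]
      simp only
      linarith
    have hlm : IsLocalMin g 0 := Filter.Eventually.of_forall hmin
    have := hlm.deriv_eq_zero
    rw [hgd.deriv] at this
    simpa using this
  intro v hv
  rcases eq_or_ne v 0 with rfl | hv0
  · simp
  · have hn : ‖v‖ ≠ 0 := norm_ne_zero_iff.mpr hv0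
    set w := ‖v‖⁻¹ • v with hw
    have hwn : ‖w‖ = 1 := by
      rw [hw, norm_smul, Real.norm_eq_abs, abs_inv, abs_norm, inv_mul_cancel₀ hn]
    have hwo : ⟪w, θ⟫ = 0 := by rw [hw, real_inner_smul_left, hv, mul_zero]
    have hvw : v = ‖v‖ • w := by rw [hw, smul_smul, mul_inv_cancel₀ hn, one_smul]
    rw [hvw, map_smul, key w hwn hwo, smul_zero]

lemma support_of_crit (γ : E → ℝ) (hsm : ContDiff ℝ (⊤ : ℕ∞) γ) {θ : E} (hθ : ‖θ‖ = 1)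
    (hpos : ∀ η : E, ‖η‖ = 1 → 0 < γ η)
    (hfr : sphereInv '' graphSet γ = frontier (convexHull ℝ (sphereInv '' graphSet γ)))
    (hsc : StrictConvex ℝ (convexHull ℝ (sphereInv '' graphSet γ)))
    (hcrit : SphereCritical γ θ) :
    ∀ η : E, ‖η‖ = 1 → γ θ * ⟪θ, η⟫ ≤ γ η := by
  set K := convexHull ℝ (sphereInv '' graphSet γ) with hK
  have hKconv : Convex ℝ K := convex_convexHull ℝ _
  have hmemK : ∀ η : E, ‖η‖ = 1 → -((γ η)⁻¹ • η) ∈ K :=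
    fun η hη => subset_convexHull ℝ _ (mem_inv_graph γ hη (hpos η hη))
  have hγθ : 0 < γ θ := hpos θ hθ
  set x₀ : E := -((γ θ)⁻¹ • θ) with hx₀
  have hx₀K : x₀ ∈ K := hmemK θ hθ
  have hθn : ‖(-θ : E)‖ = 1 := by rwa [norm_neg]
  have hmθ : 0 < γ (-θ) := hpos (-θ) hθn
  have hy0 : -((γ (-θ))⁻¹ • (-θ)) = ((γ (-θ))⁻¹ • θ) := by rw [smul_neg, neg_neg]
  have hyK : ((γ (-θ))⁻¹ • θ) ∈ K := hy0 ▸ hmemK (-θ) hθn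
  have hθθ : ⟪θ, θ⟫ = (1:ℝ) := by
    rw [real_inner_self_eq_norm_sq, hθ]; norm_num
  have hne : x₀ ≠ ((γ (-θ))⁻¹ • θ) := by
    intro hcon
    have h1 : ⟪x₀, θ⟫ = -(γ θ)⁻¹ := by
      rw [hx₀, inner_neg_left, real_inner_smul_left, hθθ, mul_one]
    have h2 : ⟪((γ (-θ))⁻¹ • θ : E), θ⟫ = (γ (-θ))⁻¹ := by
      rw [real_inner_smul_left, hθθ, mul_one]
    rw [hcon, h2] at h1
    have i1 : (0:ℝ) < (γ (-θ))⁻¹ := by positivity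
    have i2 : (0:ℝ) < (γ θ)⁻¹ := by positivity
    linarith
  obtain ⟨z, hz⟩ : (interior K).Nonempty :=
    ⟨_, hsc hx₀K hyK hne (by norm_num : (0:ℝ) < 1/2) (by norm_num : (0:ℝ) < 1/2)
      (by norm_num)⟩
  have hx₀fr : x₀ ∈ frontier K := by
    rw [hK, ← hfr]
    exact mem_inv_graph γ hθ hγθ
  have hx₀ni : x₀ ∉ interior K := hx₀fr.2
  obtain ⟨f, hf⟩ := geometric_hahn_banach_open_point (hKconv.interior) isOpen_interior hx₀ni
  have hfK : ∀ a ∈ K, f a ≤ f x₀ := by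
    intro a ha
    have hseq : ∀ m : ℕ, f ((1/((m:ℝ)+1)) • z + ((1:ℝ) - 1/((m:ℝ)+1)) • a) < f x₀ := by
      intro m
      apply hf
      have hm0 : (0:ℝ) < 1/((m:ℝ)+1) := by positivity
      have h1 : (1:ℝ)/((m:ℝ)+1) ≤ 1 := by
        rw [div_le_one (by positivity)]
        have : (0:ℝ) ≤ (m:ℝ) := Nat.cast_nonneg m
        linarith
      exact hKconv.combo_interior_closure_mem_interior hz (subset_closure ha)
        hm0 (by linarith) (by ring)
    have hcont : Continuous fun t : ℝ => f (t • z + (1 - t) • a) :=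
      f.continuous.comp ((continuous_id.smul continuous_const).add
        ((continuous_const.sub continuous_id).smul continuous_const))
    have hlim : Filter.Tendsto (fun m : ℕ => f ((1/((m:ℝ)+1)) • z + ((1:ℝ) - 1/((m:ℝ)+1)) • a))
        Filter.atTop (nhds (f a)) := by
      have h0 : Filter.Tendsto (fun m : ℕ => (1/((m:ℝ)+1) : ℝ)) Filter.atTop (nhds 0) :=
        tendsto_one_div_add_atTop_nhds_zero_nat
      have h1 := (hcont.tendsto 0).comp h0
      simp only [Function.comp_def] at h1
      simpa using h1
    exact le_of_tendsto hlim (Filter.Eventually.of_forall fun m => (hseq m).le)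
  have Hfu : ∀ w : E, ‖w‖ = 1 → ⟪w, θ⟫ = 0 → f w = 0 := by
    intro w hw hwo
    set c : ℝ → E := fun t => Real.cos t • θ + Real.sin t • w with hc
    have hc0 : c 0 = θ := by simp [hc]
    have hcu : ∀ t, ‖c t‖ = 1 := fun t => curve_norm hθ hw hwo t
    set g : ℝ → ℝ := fun t => -(γ (c t))⁻¹ * f (c t) with hg
    have hmax : ∀ t, g t ≤ g 0 := by
      intro t
      have h1 := hfK _ (hmemK (c t) (hcu t))
      have e1 : f (-((γ (c t))⁻¹ • c t)) = g t := by
        rw [map_neg, map_smul]; simp [hg, smul_eq_mul]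
      have e2 : f x₀ = g 0 := by
        rw [hx₀, map_neg, map_smul]; simp [hg, hc0, smul_eq_mul]
      rw [e1, e2] at h1
      exact h1
    have hγd : HasFDerivAt γ (fderiv ℝ γ θ) (c 0) := by
      rw [hc0]; exact ((hsm.differentiable (by simp)) θ).hasFDerivAt
    have h1 : HasDerivAt (fun t => γ (c t)) (fderiv ℝ γ θ w) 0 :=
      hγd.comp_hasDerivAt 0 (curve_hasDerivAt θ w)
    rw [hcrit w hwo] at h1
    have hγc0 : γ (c 0) ≠ 0 := by rw [hc0]; exact ne_of_gt hγθ
    have h2 := h1.inv hγc0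
    have h3 := h2.neg
    have h4 : HasDerivAt (fun t => f (c t)) (f w) 0 :=
      f.hasFDerivAt.comp_hasDerivAt 0 (curve_hasDerivAt θ w)
    have h5 := h3.mul h4
    have hlm : IsLocalMax g 0 := Filter.Eventually.of_forall hmax
    have hd0 := hlm.deriv_eq_zero
    have h5' : HasDerivAt g _ 0 := h5
    rw [h5'.deriv] at hd0
    simp only [Pi.neg_apply, Pi.inv_apply] at hd0
    rw [hc0] at hd0
    have hne : (γ θ)⁻¹ ≠ 0 := inv_ne_zero (ne_of_gt hγθ)
    field_simp at hd0
    have hm : γ θ * f w = 0 := by linarith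
    exact (mul_eq_zero.mp hm).resolve_left (ne_of_gt hγθ)
  have Hf : ∀ v : E, ⟪v, θ⟫ = 0 → f v = 0 := by
    intro v hv
    rcases eq_or_ne v 0 with rfl | hv0
    · simp
    have hn : ‖v‖ ≠ 0 := norm_ne_zero_iff.mpr hv0
    have hwn : ‖(‖v‖⁻¹ • v : E)‖ = 1 := by
      rw [norm_smul, Real.norm_eq_abs, abs_inv, abs_norm, inv_mul_cancel₀ hn]
    have hwo : ⟪(‖v‖⁻¹ • v : E), θ⟫ = 0 := by rw [real_inner_smul_left, hv, mul_zero]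
    have hvw : v = ‖v‖ • (‖v‖⁻¹ • v : E) := by rw [smul_smul, mul_inv_cancel₀ hn, one_smul]
    rw [hvw, map_smul, Hfu _ hwn hwo, smul_zero]
  have hdec : ∀ η : E, f η = ⟪η, θ⟫ * f θ := by
    intro η
    have hperp : ⟪η - ⟪η, θ⟫ • θ, θ⟫ = 0 := by
      rw [inner_sub_left, real_inner_smul_left, hθθ, mul_one, sub_self]
    have : f η = f (⟪η, θ⟫ • θ) + f (η - ⟪η, θ⟫ • θ) := by
      rw [← map_add]; congr 1; abel
    rw [this, Hf _ hperp, add_zero, map_smul, smul_eq_mul]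
  have hfθneg : f θ < 0 := by
    have h1 := hfK _ hyK
    have e1 : f ((γ (-θ))⁻¹ • θ) = (γ (-θ))⁻¹ * f θ := by rw [map_smul, smul_eq_mul]
    have e2 : f x₀ = -((γ θ)⁻¹ * f θ) := by
      rw [hx₀, map_neg, map_smul, smul_eq_mul]
    rw [e1, e2] at h1
    have i1 : (0:ℝ) < (γ (-θ))⁻¹ := by positivity
    have i2 : (0:ℝ) < (γ θ)⁻¹ := by positivity
    have hle : f θ ≤ 0 := by nlinarith
    rcases lt_or_eq_of_le hle with h | h
    · exact h
    exfalso
    have hz' := hf z hz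
    rw [hdec z, hdec x₀, h] at hz'
    simp at hz'
  intro η hη
  have h1 := hfK _ (hmemK η hη)
  have e1 : f (-((γ η)⁻¹ • η)) = -((γ η)⁻¹ * (⟪η, θ⟫ * f θ)) := by
    rw [map_neg, map_smul, smul_eq_mul, hdec η]
  have e2 : f x₀ = -((γ θ)⁻¹ * f θ) := by rw [hx₀, map_neg, map_smul, smul_eq_mul]
  rw [e1, e2] at h1
  have hγη : 0 < γ η := hpos η hη
  have hiθ : ⟪θ, η⟫ = ⟪η, θ⟫ := real_inner_comm η θ
  rw [hiθ]
  have h2 : (γ η)⁻¹ * ⟪η, θ⟫ ≤ (γ θ)⁻¹ := by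
    have ht : 0 < -f θ := by linarith
    nlinarith
  calc γ θ * ⟪η, θ⟫ = γ θ * γ η * ((γ η)⁻¹ * ⟪η, θ⟫) := by
        field_simp
    _ ≤ γ θ * γ η * (γ θ)⁻¹ := mul_le_mul_of_nonneg_left h2 (by positivity)
    _ = γ η := by field_simp

end Auxiliary

/-- For a `C^∞` strictly convex integrand `γ` with dual `δ`, the inequality
`γ(θ)·δ(−θ) ≥ 1` holds for every `θ ∈ S^n`, with equality iff `θ` is a
critical point of `γ`. -/
theorem stmt_17 {n : ℕ} (γ δ : EuclideanSpace ℝ (Fin (n+1)) → ℝ)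
    (hsm : ContDiff ℝ (⊤ : ℕ∞) γ) (hγ : StrictConvexIntegrand γ)
    (hδ : IsDualIntegrand γ δ)
    (θ : EuclideanSpace ℝ (Fin (n+1)))
    (hθ : θ ∈ Metric.sphere (0 : EuclideanSpace ℝ (Fin (n+1))) 1) :
    1 ≤ γ θ * δ (-θ) ∧ (γ θ * δ (-θ) = 1 ↔ SphereCritical γ θ) := by
  have hθn : ‖θ‖ = 1 := by simpa using hθ
  have hθm : ‖(-θ : EuclideanSpace ℝ (Fin (n+1)))‖ = 1 := by rwa [norm_neg]
  have hγpos : ∀ η : EuclideanSpace ℝ (Fin (n+1)), ‖η‖ = 1 → 0 < γ η :=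
    fun η hη => hγ.1.2.1 η (by simpa using hη)
  have hδpos : 0 < δ (-θ) := hδ.1.2.1 (-θ) (by simpa using hθm)
  have hγθ : 0 < γ θ := hγpos θ hθn
  have hθθ : ⟪θ, θ⟫ = (1:ℝ) := by
    rw [real_inner_self_eq_norm_sq, hθn]; norm_num
  -- the dual point on the frontier of the Wulff shape
  have hqmem : ((δ (-θ))⁻¹ • θ : EuclideanSpace ℝ (Fin (n+1))) ∈ frontier (Wulff γ) := by
    rw [← hδ.2]
    have := mem_inv_graph δ hθm hδpos
    rwa [smul_neg, neg_neg] at this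
  have hqW : ((δ (-θ))⁻¹ • θ : EuclideanSpace ℝ (Fin (n+1))) ∈ Wulff γ :=
    (isClosed_wulff γ).frontier_subset hqmem
  have hqθ : (δ (-θ))⁻¹ ≤ γ θ := by
    have := (mem_wulff_iff γ _).mp hqW θ hθn
    rwa [real_inner_smul_left, hθθ, mul_one] at this
  have hineq : 1 ≤ γ θ * δ (-θ) := by
    have := mul_le_mul_of_nonneg_right hqθ hδpos.le
    rwa [inv_mul_cancel₀ (ne_of_gt hδpos)] at this
  refine ⟨hineq, ?_, ?_⟩
  · -- equality → critical
    intro heq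
    have hδinv : (δ (-θ))⁻¹ = γ θ := by
      field_simp
      linarith [heq]
    rw [hδinv] at hqW
    apply crit_of_support γ hsm hθn
    intro η hη
    have := (mem_wulff_iff γ _).mp hqW η hη
    rwa [real_inner_smul_left] at this
  · -- critical → equality
    intro hcrit
    have hsupp := support_of_crit γ hsm hθn hγpos hγ.1.2.2 hγ.2 hcrit
    have hpW : (γ θ • θ : EuclideanSpace ℝ (Fin (n+1))) ∈ Wulff γ := by
      rw [mem_wulff_iff]
      intro η hη
      rw [real_inner_smul_left]
      exact hsupp η hη
    by_contra hne
    have hlt : 1 < γ θ * δ (-θ) := lt_of_le_of_ne hineq (fun h => hne h.symm)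
    set s : ℝ := (γ θ * δ (-θ))⁻¹ with hs
    have hs0 : 0 < s := by positivity
    have hs1 : s < 1 := by
      rw [hs, inv_lt_one_iff₀]
      right
      exact hlt
    have h0int : (0 : EuclideanSpace ℝ (Fin (n+1))) ∈ interior (Wulff γ) :=
      zero_mem_interior_wulff γ hsm.continuous hγpos hθn
    have hcombo := (convex_wulff γ).combo_interior_closure_mem_interior h0int
      (subset_closure hpW) (a := 1 - s) (b := s) (by linarith) hs0.le (by ring)
    have hq : ((1 - s) • (0 : EuclideanSpace ℝ (Fin (n+1))) + s • (γ θ • θ))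
        = ((δ (-θ))⁻¹ • θ : EuclideanSpace ℝ (Fin (n+1))) := by
      rw [smul_zero, zero_add, smul_smul, hs]
      congr 1
      field_simp
    rw [hq] at hcombo
    exact hqmem.2 hcombo
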